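/- arXiv:math/9209202 — 2 statements merged into one kernel-verified Lean document; each statement's English description precedes it below -/
import Mathlib

section
/- For every word a ∈ W_P and every n ≥ 0, the value [a]_{n+1} equals either [a]_n or [a]_n + 2^n. Consequently, if [a]_n ≠ 0, then [a]_{n+1} ≠ 0. -/
/-- Words built from a single generator `1` using two binary operations `·` and `∘`. -/
inductive WP : Type
  | one : WP
  | mul : WP → WP → WP
  | comp : WP → WP → WP

/-- Laver's laws (ALΣ) for two binary operations `mul` (`·`) and `comp` (`∘`). -/
def ALSigma {α : Type*} (mul comp : α → α → α) : Prop :=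
  (∀ a b c : α, comp a (comp b c) = comp (comp a b) c) ∧
  (∀ a b c : α, mul (comp a b) c = mul a (mul b c)) ∧
  (∀ a b c : α, mul a (comp b c) = comp (mul a b) (mul a c)) ∧
  (∀ a b : α, comp a b = comp (mul a b) a)

/-- `[a]_n`: the evaluation of a word `a ∈ W_P` in `P_n = ℤ/2^nℤ`, interpreting
the generator as `1`, `·` as `*_n` (`op n`) and `∘` as `∘_n` (`cmp n`). -/
def evalP (op cmp : ∀ n : ℕ, ZMod (2 ^ n) → ZMod (2 ^ n) → ZMod (2 ^ n))
    (n : ℕ) : WP → ZMod (2 ^ n)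
  | WP.one => 1
  | WP.mul a b => op n (evalP op cmp n a) (evalP op cmp n b)
  | WP.comp a b => cmp n (evalP op cmp n a) (evalP op cmp n b)

/-!
Reduction mod `2^n` is a homomorphism `P_{n+1} → P_n`, so `[a]_n` is `[a]_{n+1}` reduced mod `2^n`,
which gives both claims. Since `P_n` is the only structure on `ℤ/2^n` satisfying (ALΣ) with
`a · 1 = a + 1`, it is enough that congruence mod `2^n` is compatible with both operations of
`P_{n+1}`.

Order `ℤ/2^(n+1)` by representatives in `{1, …, 2^(n+1)}`. For `a ≠ 0` every `a · b` lies strictly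
above `a`, which drives a descending induction: compatibility of `∘` above level `r` gives it at
level `r`. Via `a · (b + 1) = (a · b) ∘ a + 1`, congruent `x, y` have congruent rows column by
column, and the row of `x` reduced mod `2^n` is an orbit of a self-map of `ℤ/2^n`; having period
`2^(n+1)`, its minimal period is a power of `2` at most `2^n`, so `x · u mod 2^n` depends only on
`u mod 2^n`.
-/

open Function

namespace ZMod

variable {N : ℕ} [NeZero N]

/-- The representative of `x` in `{1, …, N}`, the indexing of Laver tables: `0` comes last. -/
def valPos (x : ZMod N) : ℕ := (x - 1).val + 1

theorem valPos_le (x : ZMod N) : x.valPos ≤ N :=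
  (x - 1).val_lt

theorem val_eq_val_sub_one_add_one {x : ZMod N} (hx : x ≠ 0) : x.val = (x - 1).val + 1 := by
  have hcast : (((x - 1).val + 1 : ℕ) : ZMod N) = x := by
    rw [Nat.cast_succ, natCast_zmod_val, sub_add_cancel]
  have hlt : (x - 1).val + 1 < N := by
    refine lt_of_le_of_ne (x - 1).val_lt fun h => hx ?_
    rw [← hcast, h, natCast_self]
  conv_lhs => rw [← hcast]
  exact val_cast_of_lt hlt

theorem valPos_add_one {x : ZMod N} (hx : x ≠ 0) : (x + 1).valPos = x.valPos + 1 := by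
  rw [valPos, valPos, add_sub_cancel_right, val_eq_val_sub_one_add_one hx]

@[elab_as_elim]
theorem induction_from_one {motive : ZMod N → Prop} (one : motive 1)
    (succ : ∀ b, motive b → motive (b + 1)) (b : ZMod N) : motive b := by
  have key : ∀ k : ℕ, motive (k + 1) := by
    intro k
    induction k with
    | zero => simpa using one
    | succ k ih => simpa using succ _ ih
  simpa using key (b - 1).val

@[elab_as_elim]
theorem valPos_induction {motive : ZMod N → Prop}
    (ind : ∀ a, (∀ b, a.valPos < b.valPos → motive b) → motive a) (a : ZMod N) : motive a :=
  (measure fun a : ZMod N => N - a.valPos).wf.induction a fun a ih =>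
    ind a fun b hb => ih b (by have := b.valPos_le; change N - b.valPos < N - a.valPos; omega)

end ZMod

namespace ALSigma

variable {α : Type*} {mul cmp : α → α → α}

theorem comp_eq (hl : ALSigma mul cmp) (a b : α) : cmp a b = cmp (mul a b) a :=
  hl.2.2.2 a b

theorem of_surjective {β : Type*} {mul' cmp' : β → β → β} (hl : ALSigma mul cmp) (f : α → β)
    (hf : Function.Surjective f) (hmul : ∀ a b, f (mul a b) = mul' (f a) (f b))
    (hcmp : ∀ a b, f (cmp a b) = cmp' (f a) (f b)) : ALSigma mul' cmp' := by
  refine ⟨hf.forall₃.2 fun a b c => ?_, hf.forall₃.2 fun a b c => ?_,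
    hf.forall₃.2 fun a b c => ?_, hf.forall₂.2 fun a b => ?_⟩ <;> simp only [← hmul, ← hcmp]
  exacts [congrArg f (hl.1 a b c), congrArg f (hl.2.1 a b c), congrArg f (hl.2.2.1 a b c),
    congrArg f (hl.2.2.2 a b)]

section Successor

variable {α : Type*} {mul cmp : α → α → α}

theorem mul_add_one [Add α] [One α] (hl : ALSigma mul cmp) (hs : ∀ a, mul a 1 = a + 1)
    (a b : α) : mul a (b + 1) = cmp a b + 1 := by
  rw [← hs, ← hs, hl.2.1]

theorem comp_zero [AddRightCancelMonoid α] [One α] (hl : ALSigma mul cmp)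
    (hs : ∀ a, mul a 1 = a + 1) (a : α) : cmp a 0 = a := by
  have h := hl.mul_add_one hs a 0
  rwa [zero_add, hs, add_left_inj, eq_comm] at h

end Successor

section ZMod

variable {N : ℕ} [NeZero N] {mul cmp : ZMod N → ZMod N → ZMod N}

theorem zero_mul (hl : ALSigma mul cmp) (hs : ∀ a, mul a 1 = a + 1) (b : ZMod N) :
    mul 0 b = b := by
  induction b using ZMod.induction_from_one with
  | one => rw [hs, zero_add]
  | succ b ih => rw [hl.mul_add_one hs, hl.comp_eq, ih, hl.comp_zero hs]

theorem zero_comp (hl : ALSigma mul cmp) (hs : ∀ a, mul a 1 = a + 1) (b : ZMod N) :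
    cmp 0 b = b := by
  rw [hl.comp_eq, hl.zero_mul hs, hl.comp_zero hs]

/-- The bound on `a ∘ b = (a · b) ∘ a` comes from the row of `a · b`, which lies higher, and feeds
the next column through `a · (b + 1) = a ∘ b + 1`. -/
theorem valPos_lt_mul_and_comp (hl : ALSigma mul cmp) (hs : ∀ a, mul a 1 = a + 1)
    {a : ZMod N} (ha : a ≠ 0) (b : ZMod N) :
    a.valPos < (mul a b).valPos ∧ a.valPos ≤ (cmp a b).valPos ∧ cmp a b ≠ 0 := by
  induction a using ZMod.valPos_induction generalizing b with
  | ind a ih =>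
  have comp_of_mul : ∀ b, a.valPos < (mul a b).valPos →
      a.valPos ≤ (cmp a b).valPos ∧ cmp a b ≠ 0 := by
    intro b hb
    rw [hl.comp_eq]
    by_cases h0 : mul a b = 0
    · rw [h0, hl.zero_comp hs]
      exact ⟨le_rfl, ha⟩
    · obtain ⟨-, hle, hne⟩ := ih _ hb h0 a
      exact ⟨hb.le.trans hle, hne⟩
  have mul_bound : ∀ b, a.valPos < (mul a b).valPos := by
    intro b
    induction b using ZMod.induction_from_one with
    | one => rw [hs, ZMod.valPos_add_one ha]; omega
    | succ b ihb =>
      obtain ⟨hle, hne⟩ := comp_of_mul b ihb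
      rw [hl.mul_add_one hs, ZMod.valPos_add_one hne]
      omega
  exact ⟨mul_bound b, comp_of_mul b (mul_bound b)⟩

theorem valPos_lt_valPos_mul (hl : ALSigma mul cmp) (hs : ∀ a, mul a 1 = a + 1)
    {a : ZMod N} (ha : a ≠ 0) (b : ZMod N) : a.valPos < (mul a b).valPos :=
  (hl.valPos_lt_mul_and_comp hs ha b).1

theorem unique_of_mul_one_eq_add_one {mul' cmp' : ZMod N → ZMod N → ZMod N} (hl : ALSigma mul cmp)
    (hs : ∀ a, mul a 1 = a + 1) (hl' : ALSigma mul' cmp') (hs' : ∀ a, mul' a 1 = a + 1) :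
    mul = mul' ∧ cmp = cmp' := by
  suffices h : ∀ a b, mul a b = mul' a b ∧ cmp a b = cmp' a b from
    ⟨funext₂ fun a b => (h a b).1, funext₂ fun a b => (h a b).2⟩
  intro a
  induction a using ZMod.valPos_induction with
  | ind a ih =>
  by_cases ha : a = 0
  · subst ha
    intro b
    rw [hl.zero_mul hs, hl'.zero_mul hs', hl.zero_comp hs, hl'.zero_comp hs']
    exact ⟨rfl, rfl⟩
  have comp_of_mul : ∀ b, mul a b = mul' a b → cmp a b = cmp' a b := by
    intro b hb
    rw [hl.comp_eq, hl'.comp_eq, ← hb]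
    exact (ih _ (hl.valPos_lt_valPos_mul hs ha b) a).2
  have mul_eq : ∀ b, mul a b = mul' a b := by
    intro b
    induction b using ZMod.induction_from_one with
    | one => rw [hs, hs']
    | succ b ihb => rw [hl.mul_add_one hs, hl'.mul_add_one hs', comp_of_mul b ihb]
  exact fun b => ⟨mul_eq b, comp_of_mul b (mul_eq b)⟩

end ZMod

end ALSigma

/-- A sequence whose next term is a function of the current one is an orbit of a map on
`α`; its minimal period divides `p ^ (n + 1)` and is at most `card α`, so it divides `p ^ n`. -/
theorem Function.Periodic.pow_of_pow_succ {α : Type*} [Fintype α] {c : ℕ → α} {p n : ℕ}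
    (hp : p.Prime) (hcard : Fintype.card α < p ^ (n + 1))
    (hdet : ∀ i j, c i = c j → c (i + 1) = c (j + 1)) (hc : Periodic c (p ^ (n + 1))) :
    Periodic c (p ^ n) := by
  classical
  obtain ⟨f, hf⟩ : ∃ f : α → α, ∀ j, f (c j) = c (j + 1) :=
    ⟨fun y => if h : ∃ j, c j = y then c (h.choose + 1) else y, fun j =>
      have h : ∃ i, c i = c j := ⟨j, rfl⟩
      (dif_pos h).trans (hdet _ _ h.choose_spec)⟩
  have orbit : ∀ j, c j = f^[j] (c 0) := by
    intro j
    induction j with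
    | zero => rfl
    | succ j ih => rw [iterate_succ_apply', ← ih, hf]
  have hpt : IsPeriodicPt f (p ^ (n + 1)) (c 0) := by
    rw [IsPeriodicPt, IsFixedPt, ← orbit, ← zero_add (p ^ (n + 1)), hc]
  obtain ⟨i, hi, hmin⟩ := (Nat.dvd_prime_pow hp).1 hpt.minimalPeriod_dvd
  have hin : i ≤ n := by
    have := minimalPeriod_le_card (f := f) (x := c 0)
    rw [hmin] at this
    exact Nat.lt_succ_iff.1 ((Nat.pow_lt_pow_iff_right hp.one_lt).1 (this.trans_lt hcard))
  have hpt' : IsPeriodicPt f (p ^ n) (c 0) :=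
    isPeriodicPt_iff_minimalPeriod_dvd.2 (hmin ▸ pow_dvd_pow p hin)
  intro j
  rw [orbit (j + p ^ n), iterate_add_apply, hpt'.eq, ← orbit]

theorem Function.Periodic.eq_of_castHom_eq {β : Type*} {N d : ℕ} [NeZero N] (hd : d ∣ N)
    {f : ZMod N → β} (hf : Periodic f (d : ZMod N)) {u w : ZMod N}
    (h : ZMod.castHom hd (ZMod d) u = ZMod.castHom hd (ZMod d) w) : f u = f w := by
  obtain ⟨k, hk⟩ : d ∣ (u - w).val := by
    rw [← ZMod.natCast_eq_zero_iff, ← ZMod.cast_eq_val, ← ZMod.castHom_apply (h := hd),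
      map_sub, h, sub_self]
  have hu : u = w + k * d := by
    rw [← Nat.cast_mul, mul_comm, ← hk, ZMod.natCast_zmod_val, add_sub_cancel]
  rw [hu, hf.nat_mul k]

abbrev proj (n : ℕ) : ZMod (2 ^ (n + 1)) →+* ZMod (2 ^ n) :=
  ZMod.castHom (pow_dvd_pow 2 n.le_succ) _

theorem proj_natCast_val (n : ℕ) (a : ZMod (2 ^ n)) : proj n (a.val : ZMod (2 ^ (n + 1))) = a := by
  rw [map_natCast, ZMod.natCast_zmod_val]

theorem val_eq_or_eq_proj_val_add (n : ℕ) (x : ZMod (2 ^ (n + 1))) :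
    x.val = (proj n x).val ∨ x.val = (proj n x).val + 2 ^ n := by
  rw [ZMod.castHom_apply, ZMod.cast_eq_val, ZMod.val_natCast]
  have hq : x.val / 2 ^ n < 2 := Nat.div_lt_of_lt_mul (by rw [← pow_succ]; exact x.val_lt)
  have hx := Nat.mod_add_div x.val (2 ^ n)
  interval_cases x.val / 2 ^ n <;> omega

section Congruence

variable {n : ℕ} {mul cmp : ZMod (2 ^ (n + 1)) → ZMod (2 ^ (n + 1)) → ZMod (2 ^ (n + 1))}

def CompCongrAbove (n : ℕ) (cmp : ZMod (2 ^ (n + 1)) → ZMod (2 ^ (n + 1)) → ZMod (2 ^ (n + 1)))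
    (r : ℕ) : Prop :=
  ∀ x y u w : ZMod (2 ^ (n + 1)), r ≤ x.valPos → r ≤ y.valPos → proj n x = proj n y →
    proj n u = proj n w → proj n (cmp x u) = proj n (cmp y w)

theorem compCongrAbove_of_lt {r : ℕ} (hr : 2 ^ (n + 1) < r) : CompCongrAbove n cmp r :=
  fun x _ _ _ hx => absurd (hr.trans_le hx) (x.valPos_le).not_gt

section Step

variable (hl : ALSigma mul cmp) (hs : ∀ a, mul a 1 = a + 1) {r : ℕ}
  (hQ : CompCongrAbove n cmp (r + 1))
include hl hs hQ

theorem proj_comp_eq_of_proj_eq_zero {x c d : ZMod (2 ^ (n + 1))} (hx : r ≤ x.valPos)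
    (hx0 : x ≠ 0) (hπx : proj n x = 0) (h : proj n (mul x c) = proj n d) :
    proj n (cmp x c) = proj n d := by
  have hxc : r + 1 ≤ (mul x c).valPos := hx.trans_lt (hl.valPos_lt_valPos_mul hs hx0 c)
  rw [hl.comp_eq, hQ _ _ x 0 hxc hxc rfl (by rw [hπx, map_zero]), hl.comp_zero hs, h]

theorem proj_comp_congr_of_proj_mul_congr {x y c d : ZMod (2 ^ (n + 1))} (hx : r ≤ x.valPos)
    (hy : r ≤ y.valPos) (hxy : proj n x = proj n y) (hcd : proj n c = proj n d)
    (hmul : proj n (mul x c) = proj n (mul y d)) : proj n (cmp x c) = proj n (cmp y d) := by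
  rcases eq_or_ne x 0 with rfl | hx0 <;> rcases eq_or_ne y 0 with rfl | hy0
  · rwa [hl.zero_comp hs, hl.zero_comp hs]
  · rw [hl.zero_mul hs] at hmul
    rw [hl.zero_comp hs, proj_comp_eq_of_proj_eq_zero hl hs hQ hy hy0
      (hxy.symm.trans (map_zero _)) hmul.symm]
  · rw [hl.zero_mul hs] at hmul
    rw [hl.zero_comp hs, proj_comp_eq_of_proj_eq_zero hl hs hQ hx hx0
      (hxy.trans (map_zero _)) hmul]
  · rw [hl.comp_eq, hl.comp_eq y]
    exact hQ _ _ _ _ (hx.trans_lt (hl.valPos_lt_valPos_mul hs hx0 c))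
      (hy.trans_lt (hl.valPos_lt_valPos_mul hs hy0 d)) hmul hxy

theorem proj_mul_congr_left {x y : ZMod (2 ^ (n + 1))} (hx : r ≤ x.valPos) (hy : r ≤ y.valPos)
    (hxy : proj n x = proj n y) (c : ZMod (2 ^ (n + 1))) :
    proj n (mul x c) = proj n (mul y c) := by
  induction c using ZMod.induction_from_one with
  | one => rw [hs, hs, map_add, map_add, hxy]
  | succ c ih =>
    rw [hl.mul_add_one hs, hl.mul_add_one hs, map_add, map_add,
      proj_comp_congr_of_proj_mul_congr hl hs hQ hx hy hxy rfl ih]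

theorem periodic_proj_mul {x : ZMod (2 ^ (n + 1))} (hx : r ≤ x.valPos) :
    Periodic (fun u => proj n (mul x u)) ((2 ^ n : ℕ) : ZMod (2 ^ (n + 1))) := by
  rcases eq_or_ne x 0 with rfl | hx0
  · intro u
    simp only [hl.zero_mul hs, map_add, map_natCast, ZMod.natCast_self, add_zero]
  set c : ℕ → ZMod (2 ^ n) := fun j => proj n (mul x j) with hc
  have hdet : ∀ i j, c i = c j → c (i + 1) = c (j + 1) := by
    intro i j h
    have hrank : ∀ j : ℕ, r + 1 ≤ (mul x j).valPos := fun j =>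
      hx.trans_lt (hl.valPos_lt_valPos_mul hs hx0 _)
    simp only [hc, Nat.cast_succ, hl.mul_add_one hs, hl.comp_eq x, map_add] at h ⊢
    rw [hQ _ _ x x (hrank i) (hrank j) h rfl]
  have hper : Periodic c (2 ^ (n + 1)) := fun j => by
    simp only [hc, Nat.cast_add, ZMod.natCast_self, add_zero]
  have hcard : Fintype.card (ZMod (2 ^ n)) < 2 ^ (n + 1) := by
    rw [ZMod.card]
    exact Nat.pow_lt_pow_succ one_lt_two
  intro u
  simpa only [hc, Nat.cast_add, ZMod.natCast_zmod_val] using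
    hper.pow_of_pow_succ Nat.prime_two hcard hdet u.val

theorem proj_mul_congr {x y u w : ZMod (2 ^ (n + 1))} (hx : r ≤ x.valPos) (hy : r ≤ y.valPos)
    (hxy : proj n x = proj n y) (huw : proj n u = proj n w) :
    proj n (mul x u) = proj n (mul y w) :=
  ((periodic_proj_mul hl hs hQ hx).eq_of_castHom_eq _ huw).trans
    (proj_mul_congr_left hl hs hQ hx hy hxy w)

theorem CompCongrAbove.of_succ : CompCongrAbove n cmp r := fun _ _ _ _ hx hy hxy huw =>
  proj_comp_congr_of_proj_mul_congr hl hs hQ hx hy hxy huw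
    (proj_mul_congr hl hs hQ hx hy hxy huw)

end Step

theorem compCongrAbove (hl : ALSigma mul cmp) (hs : ∀ a, mul a 1 = a + 1) (r : ℕ) :
    CompCongrAbove n cmp r := by
  obtain hr | hr := le_or_gt r (2 ^ (n + 1) + 1)
  · induction hr using Nat.decreasingInduction with
    | self => exact compCongrAbove_of_lt (Nat.lt_succ_self _)
    | of_succ r _ ih => exact ih.of_succ hl hs
  · exact compCongrAbove_of_lt (by omega)

end Congruence

def inducedOp (n : ℕ) (f : ZMod (2 ^ (n + 1)) → ZMod (2 ^ (n + 1)) → ZMod (2 ^ (n + 1)))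
    (a b : ZMod (2 ^ n)) : ZMod (2 ^ n) :=
  proj n (f a.val b.val)

theorem proj_apply_eq_inducedOp {n : ℕ}
    {f : ZMod (2 ^ (n + 1)) → ZMod (2 ^ (n + 1)) → ZMod (2 ^ (n + 1))}
    (hf : ∀ x y u w, proj n x = proj n y → proj n u = proj n w → proj n (f x u) = proj n (f y w))
    (u w : ZMod (2 ^ (n + 1))) : proj n (f u w) = inducedOp n f (proj n u) (proj n w) :=
  hf _ _ _ _ (proj_natCast_val n _).symm (proj_natCast_val n _).symm

theorem proj_mul_and_comp {n : ℕ}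
    {mul cmp : ZMod (2 ^ (n + 1)) → ZMod (2 ^ (n + 1)) → ZMod (2 ^ (n + 1))}
    {mul' cmp' : ZMod (2 ^ n) → ZMod (2 ^ n) → ZMod (2 ^ n)} (hl : ALSigma mul cmp)
    (hs : ∀ a, mul a 1 = a + 1) (hl' : ALSigma mul' cmp') (hs' : ∀ a, mul' a 1 = a + 1)
    (u w : ZMod (2 ^ (n + 1))) :
    proj n (mul u w) = mul' (proj n u) (proj n w) ∧
      proj n (cmp u w) = cmp' (proj n u) (proj n w) := by
  have hQ := compCongrAbove hl hs
  have hmul := proj_apply_eq_inducedOp (f := mul) fun x y u w hxy huw =>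
    proj_mul_congr hl hs (hQ 1) (Nat.zero_le _) (Nat.zero_le _) hxy huw
  have hcmp := proj_apply_eq_inducedOp (f := cmp) fun x y u w hxy huw =>
    hQ 0 x y u w (Nat.zero_le _) (Nat.zero_le _) hxy huw
  have hs_ind : ∀ a, inducedOp n mul a 1 = a + 1 := fun a => by
    rw [← proj_natCast_val n a, ← map_one (proj n), ← hmul, hs, map_add]
  obtain ⟨rfl, rfl⟩ := ALSigma.unique_of_mul_one_eq_add_one
    (hl.of_surjective (proj n) (ZMod.castHom_surjective _) hmul hcmp) hs_ind hl' hs'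
  exact ⟨hmul u w, hcmp u w⟩

theorem proj_evalP (op cmp : ∀ n : ℕ, ZMod (2 ^ n) → ZMod (2 ^ n) → ZMod (2 ^ n)) {n : ℕ}
    (hl : ALSigma (op (n + 1)) (cmp (n + 1))) (hs : ∀ a, op (n + 1) a 1 = a + 1)
    (hl' : ALSigma (op n) (cmp n)) (hs' : ∀ a, op n a 1 = a + 1) (a : WP) :
    proj n (evalP op cmp (n + 1) a) = evalP op cmp n a := by
  induction a with
  | one => exact map_one _
  | mul a b iha ihb => rw [evalP, evalP, (proj_mul_and_comp hl hs hl' hs' _ _).1, iha, ihb]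
  | comp a b iha ihb => rw [evalP, evalP, (proj_mul_and_comp hl hs hl' hs' _ _).2, iha, ihb]

theorem stmt_16 (op cmp : ∀ n : ℕ, ZMod (2 ^ n) → ZMod (2 ^ n) → ZMod (2 ^ n))
    (hlaws : ∀ n, ALSigma (op n) (cmp n))
    (hsucc : ∀ n, ∀ a : ZMod (2 ^ n), op n a 1 = a + 1)
    (a : WP) (n : ℕ) :
    ((evalP op cmp (n + 1) a).val = (evalP op cmp n a).val ∨
      (evalP op cmp (n + 1) a).val = (evalP op cmp n a).val + 2 ^ n) ∧
    (evalP op cmp n a ≠ 0 → evalP op cmp (n + 1) a ≠ 0) := by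
  have h := proj_evalP op cmp (hlaws (n + 1)) (hsucc (n + 1)) (hlaws n) (hsucc n) a
  refine ⟨h ▸ val_eq_or_eq_proj_val_add n _, fun hne h0 => hne ?_⟩
  rw [← h, h0, map_zero]
end

section
/- Let a, b ∈ W_P be words such that [b]_m ≠ 0 for some m, and let s(b) be the signature of b, i.e. the largest n with [b]_n = 0. Then for every n ≥ 0: [a·b]_n = 0 if and only if [a·t]_n = 0, where t ∈ W_P is the word representing the positive integer 2^{s(b)}. Consequently s(a·b) = s(a·t). -/
/-- The word representing the positive integer `k` (for `k ≥ 1`): the integer `1`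
is the generator, and the integer `k+1` is the word `k·1`. -/
def posWord : ℕ → WP
  | 0 => WP.one
  | 1 => WP.one
  | (k + 2) => WP.mul (posWord (k + 1)) WP.one

/-- `s` is the signature of the word `b`: the largest `n` with `[b]_n = 0`. -/
def IsSig (op cmp : ∀ n : ℕ, ZMod (2 ^ n) → ZMod (2 ^ n) → ZMod (2 ^ n))
    (b : WP) (s : ℕ) : Prop :=
  evalP op cmp s b = 0 ∧ ∀ m : ℕ, evalP op cmp m b = 0 → m ≤ s


/-! In `P_n` the zeros of a row `x ↦ a ⋆ x` form an ideal of `ℤ/2^nℤ`: `a ⋆ y = 0` forces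
`a ⋆ (x + y) = a ⋆ x`, hence `a ⋆ (c * y) = 0` for every `c`. So whether `a ⋆ y = 0` is
unchanged when `y` is multiplied by a unit. Since reduction `P_n → P_m` is a homomorphism,
a word `b` of signature `s` evaluates in every `P_n` to `2 ^ s` times a unit, whence the claim. -/

namespace ZMod

variable {N : ℕ} [NeZero N]

@[elab_as_elim]
theorem induction_add_one {P : ZMod N → Prop} (x₀ : ZMod N) (base : P x₀)
    (step : ∀ x, P x → P (x + 1)) (x : ZMod N) : P x := by
  have key : ∀ k : ℕ, P (x₀ + k) := fun k => by
    induction k with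
    | zero => simpa using base
    | succ k ih => simpa [add_assoc] using step _ ih
  simpa using key (x - x₀).val

theorem decreasing_val_induction {P : ZMod N → Prop}
    (step : ∀ a, (∀ c, a.val < c.val → P c) → P a) (a : ZMod N) : P a :=
  (measure fun a : ZMod N => N - a.val).wf.induction a fun a ih =>
    step a fun c hc => ih c (by have := c.val_lt; change N - c.val < N - a.val; omega)

theorem eq_zero_or_val_lt_val_add_one (a : ZMod N) : a + 1 = 0 ∨ a.val < (a + 1).val := by
  have h : a + 1 = ((a.val + 1 : ℕ) : ZMod N) := by push_cast [natCast_zmod_val]; rfl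
  rcases (show a.val + 1 ≤ N from a.val_lt).eq_or_lt with heq | hlt
  · left; rw [h, heq, natCast_self]
  · right; rw [h, val_cast_of_lt hlt]; omega

theorem exists_unit_mul_two_pow {n s v : ℕ} (hdvd : 2 ^ s ∣ v) (hndvd : ¬ 2 ^ (s + 1) ∣ v) :
    ∃ u : (ZMod (2 ^ n))ˣ, (v : ZMod (2 ^ n)) = u * 2 ^ s := by
  obtain ⟨w, rfl⟩ := hdvd
  have hw : Odd w := Nat.odd_iff.mpr <| by
    by_contra h
    exact hndvd (by rw [pow_succ, Nat.mul_dvd_mul_iff_left (by positivity)]; omega)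
  have hunit : IsUnit (w : ZMod (2 ^ n)) :=
    (isUnit_iff_coprime w _).mpr (Nat.Coprime.pow_right n (Nat.coprime_two_right.mpr hw))
  exact ⟨hunit.unit, by rw [hunit.unit_spec]; push_cast; ring⟩

end ZMod

/-- The recursion defining the Laver table on `ZMod N` (with `0` playing the role of `N`),
together with left self-distributivity. -/
structure IsLaverOp {α : Type*} [Add α] [One α] (op : α → α → α) : Prop where
  apply_one : ∀ a, op a 1 = a + 1
  apply_add_one : ∀ a b, op a (b + 1) = op (op a b) (a + 1)
  self_distrib : ∀ a b c, op a (op b c) = op (op a b) (op a c)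

namespace ALSigma

variable {α : Type*} [Add α] [One α] {mul comp : α → α → α}

theorem comp_add_one (h : ALSigma mul comp) (h1 : ∀ a, mul a 1 = a + 1) (a b : α) :
    comp a b + 1 = mul a (b + 1) := by
  rw [← h1, ← h1, h.2.1]

theorem isLaverOp (h : ALSigma mul comp) (h1 : ∀ a, mul a 1 = a + 1) : IsLaverOp mul where
  apply_one := h1
  apply_add_one a b := by rw [← h.comp_add_one h1, h.2.2.2, h.comp_add_one h1]
  self_distrib a b c := by rw [← h.2.1, h.2.2.2, h.2.1]

end ALSigma

namespace IsLaverOp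

variable {N : ℕ} [NeZero N] {op : ZMod N → ZMod N → ZMod N}

theorem zero_apply (hop : IsLaverOp op) (x : ZMod N) : op 0 x = x := by
  refine ZMod.induction_add_one 1 (by simpa using hop.apply_one 0) (fun x hx => ?_) x
  rw [hop.apply_add_one, hx, zero_add, hop.apply_one]

theorem apply_eq_zero_or_val_lt (hop : IsLaverOp op) (a b : ZMod N) :
    op a b = 0 ∨ a.val < (op a b).val := by
  induction a using ZMod.decreasing_val_induction generalizing b with
  | step a ih =>
    refine ZMod.induction_add_one 1 ?_ (fun b hb => ?_) b
    · rw [hop.apply_one]; exact a.eq_zero_or_val_lt_val_add_one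
    rw [hop.apply_add_one]
    rcases hb with h0 | hlt
    · rw [h0, hop.zero_apply]; exact a.eq_zero_or_val_lt_val_add_one
    · exact (ih _ hlt (a + 1)).imp_right hlt.trans

/-- `a ⋆ 0` is idempotent by self-distributivity, while `x ⋆ x` exceeds `x` unless it is `0`. -/
theorem apply_zero (hop : IsLaverOp op) (a : ZMod N) : op a 0 = 0 := by
  have hidem : op (op a 0) (op a 0) = op a 0 := by
    rw [← hop.self_distrib, hop.zero_apply]
  rcases hop.apply_eq_zero_or_val_lt (op a 0) (op a 0) with h | h
  · rwa [hidem] at h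
  · rw [hidem] at h; exact absurd h (lt_irrefl _)

theorem apply_add_of_apply_eq_zero (hop : IsLaverOp op) {a y : ZMod N} (hy : op a y = 0)
    (x : ZMod N) : op a (x + y) = op a x := by
  refine ZMod.induction_add_one 0 (by rw [zero_add, hy, hop.apply_zero]) (fun x hx => ?_) x
  rw [add_right_comm, hop.apply_add_one, hx, ← hop.apply_add_one]

theorem apply_mul_eq_zero (hop : IsLaverOp op) {a y : ZMod N} (hy : op a y = 0)
    (c : ZMod N) : op a (c * y) = 0 := by
  refine ZMod.induction_add_one 0 (by rw [zero_mul, hop.apply_zero]) (fun c hc => ?_) c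
  rw [add_one_mul, hop.apply_add_of_apply_eq_zero hy, hc]

theorem apply_unit_mul_eq_zero_iff (hop : IsLaverOp op) (a : ZMod N) (u : (ZMod N)ˣ)
    (y : ZMod N) : op a (u * y) = 0 ↔ op a y = 0 :=
  ⟨fun h => by simpa [← mul_assoc] using hop.apply_mul_eq_zero h ↑u⁻¹,
    fun h => hop.apply_mul_eq_zero h u⟩

theorem castHom_apply {M : ℕ} [NeZero M] (hMN : M ∣ N) {op' : ZMod M → ZMod M → ZMod M}
    (hop : IsLaverOp op) (hop' : IsLaverOp op') (a b : ZMod N) :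
    ZMod.castHom hMN (ZMod M) (op a b) =
      op' (ZMod.castHom hMN (ZMod M) a) (ZMod.castHom hMN (ZMod M) b) := by
  set π := ZMod.castHom hMN (ZMod M)
  induction a using ZMod.decreasing_val_induction generalizing b with
  | step a ih =>
    refine ZMod.induction_add_one 0 ?_ (fun b hb => ?_) b
    · rw [hop.apply_zero, map_zero, hop'.apply_zero]
    rw [hop.apply_add_one, map_add, map_one, hop'.apply_add_one, ← hb, ← map_one π, ← map_add]
    rcases hop.apply_eq_zero_or_val_lt a b with h0 | hlt
    · rw [h0, map_zero, hop.zero_apply, hop'.zero_apply]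
    · exact ih _ hlt _

end IsLaverOp

section Evaluation

variable {op cmp : ∀ n : ℕ, ZMod (2 ^ n) → ZMod (2 ^ n) → ZMod (2 ^ n)}

theorem castHom_evalP (hlaws : ∀ n, ALSigma (op n) (cmp n))
    (hsucc : ∀ n, ∀ a : ZMod (2 ^ n), op n a 1 = a + 1) {m n : ℕ} (hmn : m ≤ n) (w : WP) :
    ZMod.castHom (pow_dvd_pow 2 hmn) (ZMod (2 ^ m)) (evalP op cmp n w) = evalP op cmp m w := by
  set π := ZMod.castHom (pow_dvd_pow 2 hmn) (ZMod (2 ^ m))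
  have hop : ∀ a b, π (op n a b) = op m (π a) (π b) :=
    ((hlaws n).isLaverOp (hsucc n)).castHom_apply _ ((hlaws m).isLaverOp (hsucc m))
  have hcmp : ∀ a b, π (cmp n a b) = cmp m (π a) (π b) := fun a b => by
    apply add_right_cancel (b := 1)
    rw [(hlaws m).comp_add_one (hsucc m), ← map_one π, ← map_add, ← map_add,
      (hlaws n).comp_add_one (hsucc n), hop]
  induction w with
  | one => exact map_one π
  | mul x y ihx ihy => rw [evalP, evalP, hop, ihx, ihy]
  | comp x y ihx ihy => rw [evalP, evalP, hcmp, ihx, ihy]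

theorem evalP_eq_zero_iff_dvd_val (hlaws : ∀ n, ALSigma (op n) (cmp n))
    (hsucc : ∀ n, ∀ a : ZMod (2 ^ n), op n a 1 = a + 1) {m n : ℕ} (hmn : m ≤ n) (w : WP) :
    evalP op cmp m w = 0 ↔ 2 ^ m ∣ (evalP op cmp n w).val := by
  rw [← castHom_evalP hlaws hsucc hmn, ZMod.castHom_apply, ZMod.cast_eq_val,
    ZMod.natCast_eq_zero_iff]

theorem IsSig.exists_evalP_eq_unit_mul (hlaws : ∀ n, ALSigma (op n) (cmp n))
    (hsucc : ∀ n, ∀ a : ZMod (2 ^ n), op n a 1 = a + 1) {b : WP} {s : ℕ}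
    (hs : IsSig op cmp b s) (n : ℕ) :
    ∃ u : (ZMod (2 ^ n))ˣ, evalP op cmp n b = u * 2 ^ s := by
  rcases le_or_gt n s with hns | hsn
  · have htwo : (2 : ZMod (2 ^ n)) ^ s = 0 := by
      exact_mod_cast (ZMod.natCast_eq_zero_iff _ _).mpr (pow_dvd_pow 2 hns)
    refine ⟨1, ?_⟩
    rw [(evalP_eq_zero_iff_dvd_val hlaws hsucc hns b).mpr (by simp [hs.1]), htwo, mul_zero]
  · have hdvd := (evalP_eq_zero_iff_dvd_val hlaws hsucc hsn.le b).mp hs.1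
    have hndvd : ¬ 2 ^ (s + 1) ∣ (evalP op cmp n b).val := fun h =>
      absurd (hs.2 _ ((evalP_eq_zero_iff_dvd_val hlaws hsucc hsn b).mpr h)) (by omega)
    rw [← ZMod.natCast_zmod_val (evalP op cmp n b)]
    exact ZMod.exists_unit_mul_two_pow hdvd hndvd

theorem evalP_posWord (hsucc : ∀ n, ∀ a : ZMod (2 ^ n), op n a 1 = a + 1) (n : ℕ) :
    ∀ {k : ℕ}, 0 < k → evalP op cmp n (posWord k) = k
  | 1, _ => by simp [posWord, evalP]
  | k + 2, _ => by
    rw [posWord, evalP, evalP_posWord hsucc n k.succ_pos, evalP, hsucc]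
    push_cast; ring

end Evaluation

theorem stmt_17_general (op cmp : ∀ n : ℕ, ZMod (2 ^ n) → ZMod (2 ^ n) → ZMod (2 ^ n))
    (hlaws : ∀ n, ALSigma (op n) (cmp n))
    (hsucc : ∀ n, ∀ a : ZMod (2 ^ n), op n a 1 = a + 1)
    (a b : WP)
    (s : ℕ) (hs : IsSig op cmp b s) :
    (∀ n : ℕ, evalP op cmp n (WP.mul a b) = 0 ↔
      evalP op cmp n (WP.mul a (posWord (2 ^ s))) = 0) ∧
    (∀ s₁ s₂ : ℕ, IsSig op cmp (WP.mul a b) s₁ →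
      IsSig op cmp (WP.mul a (posWord (2 ^ s))) s₂ → s₁ = s₂) := by
  have key : ∀ n : ℕ, evalP op cmp n (WP.mul a b) = 0 ↔
      evalP op cmp n (WP.mul a (posWord (2 ^ s))) = 0 := fun n => by
    obtain ⟨u, hu⟩ := hs.exists_evalP_eq_unit_mul hlaws hsucc n
    rw [evalP, evalP, hu, evalP_posWord hsucc n (Nat.two_pow_pos s), Nat.cast_pow, Nat.cast_ofNat]
    exact ((hlaws n).isLaverOp (hsucc n)).apply_unit_mul_eq_zero_iff _ u _
  exact ⟨key, fun s₁ s₂ h₁ h₂ =>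
    le_antisymm (h₂.2 s₁ ((key s₁).mp h₁.1)) (h₁.2 s₂ ((key s₂).mpr h₂.1))⟩

theorem stmt_17 (op cmp : ∀ n : ℕ, ZMod (2 ^ n) → ZMod (2 ^ n) → ZMod (2 ^ n))
    (hlaws : ∀ n, ALSigma (op n) (cmp n))
    (hsucc : ∀ n, ∀ a : ZMod (2 ^ n), op n a 1 = a + 1)
    (a b : WP) (hm : ∃ m : ℕ, evalP op cmp m b ≠ 0)
    (s : ℕ) (hs : IsSig op cmp b s) :
    (∀ n : ℕ, evalP op cmp n (WP.mul a b) = 0 ↔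
      evalP op cmp n (WP.mul a (posWord (2 ^ s))) = 0) ∧
    (∀ s₁ s₂ : ℕ, IsSig op cmp (WP.mul a b) s₁ →
      IsSig op cmp (WP.mul a (posWord (2 ^ s))) s₂ → s₁ = s₂) :=
  stmt_17_general op cmp hlaws hsucc a b s hs
end
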